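/- arXiv:1002.3798 — 2 statements merged into one kernel-verified Lean document; each statement's English description precedes it below -/
import Mathlib

section
/- Let λ₀, λ > 0 and d > 0. Set a₀ = (1 + λ₀ d)^{−1}, let f(t) = λ θ(t−d) e^{−λ(t−d)} and R(t) = Σ_{k=1}^{∞} f^{⋆k}(t). Define the step input λ_step(s) = λ₀ for s ≤ 0 and λ_step(s) = λ for s > 0, and define A_step(t) = a₀ for t ≤ 0 and A_step(t) = (a₀ λ₀ / λ)·(1 + (λ₀^{−1} − λ^{−1}) R(t+d)) for t > 0. Then A_step satisfies the normalization condition 1 = ∫_{t-d}^{t} λ_step(s) A_step(s) ds + A_step(t) for all t ∈ ℝ. -/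
/-!
The convolution powers of `f` are shifted Erlang densities: `f^{⋆(n+1)}(x)` is
`λ^{n+1} y^n / n! · e^{-λy}` at `y = x - (n+1)d ≥ 0`, with distribution function `F_n`. The
algebraic identity `λ (F_n(x - d) - F_{n+1}(x)) = f^{⋆(n+2)}(x)` makes
`λ ∫_{u-d}^u R + R(u)` telescope to `λ F_0(u) + f(u) = λ` for `u ≥ d` (on a bounded-above
range only finitely many terms of `R` are nonzero), while `R` vanishes below `d`.

Off the single point `s = 0`, `lamStep · Astep` equals `λ₀a₀ + c R(s + d)` with
`c = a₀λ₀(λ₀⁻¹ - λ⁻¹)`, so the normalisation integral is `λ₀a₀d + c ∫_t^{t+d} R`. For `t ≤ 0`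
this integral vanishes; for `t > 0` the renewal equation at `u = t + d` evaluates it, and in both
cases the identity reduces to `a₀ (1 + λ₀d) = 1`.
-/

/-- Convolution of two real functions: `(u ⋆ v)(t) = ∫_ℝ u(s) v(t-s) ds`. -/
noncomputable def conv (u v : ℝ → ℝ) : ℝ → ℝ := fun t => ∫ s : ℝ, u s * v (t - s)

/-- Convolution powers: `convPow f n = f^{⋆(n+1)}`, i.e. `convPow f 0 = f`. -/
noncomputable def convPow (f : ℝ → ℝ) : ℕ → ℝ → ℝ
  | 0 => f
  | n + 1 => conv (convPow f n) f

open MeasureTheory Set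

section IndicatorIci

variable {Φ φ : ℝ → ℝ} {k : ℝ}

lemma indicator_Ici_eq_comp_max (hk : Φ k = 0) :
    (Ici k).indicator Φ = fun x => Φ (max x k) := by
  ext x
  rcases le_total k x with h | h
  · simp [h]
  · rw [max_eq_right h, hk]
    exact indicator_apply_eq_zero.mpr fun hx => le_antisymm h hx ▸ hk

lemma hasDerivWithinAt_Ioi_indicator_Ici (hΦ : ∀ x, HasDerivAt Φ (φ x) x) (x : ℝ) :
    HasDerivWithinAt ((Ici k).indicator Φ) ((Ici k).indicator φ x) (Ioi x) x := by
  rcases lt_or_ge x k with hx | hx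
  · have : (Ici k).indicator Φ =ᶠ[nhds x] fun _ => 0 := by
      filter_upwards [Iio_mem_nhds hx] with y hy
      exact indicator_of_notMem (notMem_Ici.mpr hy) Φ
    rw [indicator_of_notMem (notMem_Ici.mpr hx)]
    exact ((hasDerivAt_const x 0).congr_of_eventuallyEq this).hasDerivWithinAt
  · rw [indicator_of_mem (mem_Ici.mpr hx)]
    refine (hΦ x).hasDerivWithinAt.congr (fun y hy => ?_) (indicator_of_mem (mem_Ici.mpr hx) Φ)
    exact indicator_of_mem (mem_Ici.mpr (hx.trans (le_of_lt hy))) Φ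

lemma intervalIntegrable_indicator_Ici (hφ : Continuous φ) (a b : ℝ) :
    IntervalIntegrable ((Ici k).indicator φ) volume a b := by
  have h := hφ.intervalIntegrable (μ := volume) a b
  exact ⟨h.1.indicator measurableSet_Ici, h.2.indicator measurableSet_Ici⟩

lemma integral_indicator_Ici_of_hasDerivAt (hΦ : ∀ x, HasDerivAt Φ (φ x) x) (hφ : Continuous φ)
    (hk : Φ k = 0) (a b : ℝ) :
    ∫ x in a..b, (Ici k).indicator φ x = (Ici k).indicator Φ b - (Ici k).indicator Φ a := by
  refine intervalIntegral.integral_eq_sub_of_hasDeriv_right ?_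
    (fun x _ => hasDerivWithinAt_Ioi_indicator_Ici hΦ x) (intervalIntegrable_indicator_Ici hφ a b)
  rw [indicator_Ici_eq_comp_max hk]
  have hc : Continuous Φ := continuous_iff_continuousAt.mpr fun x => (hΦ x).continuousAt
  exact (hc.comp (continuous_id.max continuous_const)).continuousOn

end IndicatorIci

open Finset in
noncomputable def erlangCDF (lam : ℝ) (n : ℕ) (y : ℝ) : ℝ :=
  1 - Real.exp (-lam * y) * ∑ j ∈ range (n + 1), (lam * y) ^ j / j.factorial

noncomputable def erlangPDF (lam : ℝ) (n : ℕ) (y : ℝ) : ℝ :=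
  lam ^ (n + 1) * y ^ n / n.factorial * Real.exp (-lam * y)

section Erlang

variable (lam : ℝ) (n : ℕ)

lemma continuous_erlangPDF : Continuous (erlangPDF lam n) := by
  unfold erlangPDF; fun_prop

lemma erlangCDF_zero : erlangCDF lam n 0 = 0 := by
  simp [erlangCDF, Finset.sum_range_succ']

lemma erlangCDF_add_erlangPDF_zero (y : ℝ) :
    lam * erlangCDF lam 0 y + erlangPDF lam 0 y = lam := by
  simp only [erlangCDF, erlangPDF, zero_add, Finset.sum_range_one, pow_zero, pow_one,
    Nat.factorial_zero, Nat.cast_one, div_one]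
  ring

lemma erlangCDF_succ (y : ℝ) :
    erlangCDF lam (n + 1) y =
      erlangCDF lam n y - Real.exp (-lam * y) * (lam * y) ^ (n + 1) / (n + 1).factorial := by
  rw [erlangCDF, erlangCDF, Finset.sum_range_succ]; ring

lemma erlangPDF_succ (y : ℝ) :
    erlangPDF lam (n + 1) y =
      lam * (Real.exp (-lam * y) * (lam * y) ^ (n + 1) / (n + 1).factorial) := by
  rw [erlangPDF]; ring

lemma erlangCDF_sub_erlangCDF_succ (y : ℝ) :
    lam * (erlangCDF lam n y - erlangCDF lam (n + 1) y) = erlangPDF lam (n + 1) y := by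
  rw [erlangCDF_succ, erlangPDF_succ]; ring

lemma hasDerivAt_erlangCDF (y : ℝ) : HasDerivAt (erlangCDF lam n) (erlangPDF lam n y) y := by
  have hexp : HasDerivAt (fun y => Real.exp (-lam * y)) (Real.exp (-lam * y) * -lam) y := by
    simpa using ((hasDerivAt_id y).const_mul (-lam)).exp
  induction n with
  | zero =>
    refine (hexp.const_sub 1).congr_of_eventuallyEq (.of_forall fun y => by simp [erlangCDF])
      |>.congr_deriv ?_
    simp only [erlangPDF, zero_add, pow_one, pow_zero, mul_one, Nat.factorial_zero, Nat.cast_one,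
      div_one]
    ring
  | succ n ih =>
    have hpow :
        HasDerivAt (fun y => (lam * y) ^ (n + 1)) ((n + 1 : ℕ) * (lam * y) ^ n * lam) y := by
      simpa using ((hasDerivAt_id y).const_mul lam).fun_pow (n + 1)
    refine (ih.sub ((hexp.mul hpow).div_const _)).congr_of_eventuallyEq
      (.of_forall fun y => erlangCDF_succ lam n y) |>.congr_deriv ?_
    rw [erlangPDF_succ, erlangPDF, Nat.factorial_succ]
    push_cast
    field_simp
    ring

end Erlang

noncomputable def shiftedErlangPDF (lam d : ℝ) (n : ℕ) : ℝ → ℝ :=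
  (Ici ((n + 1) * d)).indicator fun x => erlangPDF lam n (x - (n + 1) * d)

noncomputable def shiftedErlangCDF (lam d : ℝ) (n : ℕ) : ℝ → ℝ :=
  (Ici ((n + 1) * d)).indicator fun x => erlangCDF lam n (x - (n + 1) * d)

section ShiftedErlang

variable (lam d : ℝ) (n : ℕ)

lemma shiftedErlangPDF_zero :
    shiftedErlangPDF lam d 0 = (Ici d).indicator fun x => lam * Real.exp (-lam * (x - d)) := by
  simp [shiftedErlangPDF, erlangPDF]

lemma shiftedErlangPDF_eq_zero_of_lt {x : ℝ} (hx : x < (n + 1) * d) :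
    shiftedErlangPDF lam d n x = 0 :=
  indicator_of_notMem (notMem_Ici.mpr hx) _

lemma shiftedErlangCDF_eq_zero_of_le {x : ℝ} (hx : x ≤ (n + 1) * d) :
    shiftedErlangCDF lam d n x = 0 := by
  refine indicator_apply_eq_zero.mpr fun hx' => ?_
  rw [le_antisymm hx hx', sub_self, erlangCDF_zero]

lemma intervalIntegrable_shiftedErlangPDF (a b : ℝ) :
    IntervalIntegrable (shiftedErlangPDF lam d n) volume a b :=
  intervalIntegrable_indicator_Ici ((continuous_erlangPDF lam n).comp (continuous_sub_right _)) a b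

lemma integral_shiftedErlangPDF (a b : ℝ) :
    ∫ x in a..b, shiftedErlangPDF lam d n x =
      shiftedErlangCDF lam d n b - shiftedErlangCDF lam d n a :=
  integral_indicator_Ici_of_hasDerivAt (fun x => (hasDerivAt_erlangCDF lam n _).comp_sub_const x _)
    ((continuous_erlangPDF lam n).comp (continuous_sub_right _)) (by simp [erlangCDF_zero]) a b

lemma shiftedErlangCDF_sub_shiftedErlangCDF_succ (x : ℝ) :
    lam * (shiftedErlangCDF lam d n (x - d) - shiftedErlangCDF lam d (n + 1) x) =
      shiftedErlangPDF lam d (n + 1) x := by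
  have hshift : x - d - (n + 1) * d = x - ((n + 1 : ℕ) + 1) * d := by push_cast; ring
  simp only [shiftedErlangCDF, shiftedErlangPDF, indicator_apply, mem_Ici]
  split_ifs with h₁ h₂ h₂
  · rw [hshift, erlangCDF_sub_erlangCDF_succ]
  · push_cast at h₂; linarith
  · push_cast at h₂; linarith
  · ring

lemma conv_shiftedErlangPDF :
    conv (shiftedErlangPDF lam d n) (shiftedErlangPDF lam d 0) =
      shiftedErlangPDF lam d (n + 1) := by
  ext t
  set k : ℝ := (n + 1) * d
  set C := lam ^ (n + 2) / n.factorial * Real.exp (-lam * (t - (k + d))) with hC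
  have hintegrand : (fun s => shiftedErlangPDF lam d n s * shiftedErlangPDF lam d 0 (t - s)) =
      (Icc k (t - d)).indicator fun s => C * (s - k) ^ n := by
    ext s
    by_cases hs : s ∈ Icc k (t - d)
    · have hexp : Real.exp (-lam * (s - k)) * Real.exp (-lam * (t - s - d)) =
          Real.exp (-lam * (t - (k + d))) := by rw [← Real.exp_add]; ring_nf
      rw [indicator_of_mem hs, shiftedErlangPDF_zero, shiftedErlangPDF,
        indicator_of_mem (mem_Ici.mpr hs.1), indicator_of_mem (mem_Ici.mpr (by linarith [hs.2])),
        erlangPDF, hC]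
      linear_combination lam ^ (n + 2) * (s - k) ^ n / n.factorial * hexp
    · rw [indicator_of_notMem hs]
      rcases not_and_or.mp hs with hs | hs
      · rw [shiftedErlangPDF_eq_zero_of_lt _ _ _ (not_le.mp hs), zero_mul]
      · rw [shiftedErlangPDF_zero, indicator_of_notMem (notMem_Ici.mpr (by linarith)), mul_zero]
  have hk : ((n + 1 : ℕ) + 1) * d = k + d := by push_cast; ring
  rw [conv, hintegrand, integral_indicator measurableSet_Icc, integral_Icc_eq_integral_Ioc,
    shiftedErlangPDF, hk]
  rcases le_or_gt k (t - d) with h | h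
  · rw [← intervalIntegral.integral_of_le h, intervalIntegral.integral_const_mul,
      intervalIntegral.integral_comp_sub_right (· ^ n), sub_self, integral_pow,
      indicator_of_mem (by simp only [mem_Ici]; linarith), erlangPDF, Nat.factorial_succ]
    push_cast
    rw [hC]
    field_simp
    ring
  · rw [Ioc_eq_empty (not_lt.mpr h.le), Measure.restrict_empty, integral_zero_measure,
      indicator_of_notMem (by simp only [mem_Ici]; linarith)]

end ShiftedErlang

lemma convPow_shiftedErlangPDF_zero (lam d : ℝ) (n : ℕ) :
    convPow (shiftedErlangPDF lam d 0) n = shiftedErlangPDF lam d n := by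
  induction n with
  | zero => rfl
  | succ n ih => rw [convPow, ih, conv_shiftedErlangPDF]

noncomputable def renewalDensity (lam d x : ℝ) : ℝ := ∑' n : ℕ, shiftedErlangPDF lam d n x

section RenewalDensity

open Finset

variable {lam d : ℝ}

lemma exists_lt_succ_mul (hd : 0 < d) (x : ℝ) : ∃ N : ℕ, x < (N + 1) * d := by
  obtain ⟨N, hN⟩ := exists_nat_gt (x / d)
  exact ⟨N, by rw [div_lt_iff₀ hd] at hN; linarith⟩

lemma renewalDensity_eq_sum (hd : 0 < d) {N : ℕ} {x : ℝ} (hx : x < (N + 1) * d) :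
    renewalDensity lam d x = ∑ n ∈ range N, shiftedErlangPDF lam d n x := by
  refine tsum_eq_sum fun n hn => shiftedErlangPDF_eq_zero_of_lt lam d n (hx.trans_le ?_)
  gcongr
  exact_mod_cast not_lt.mp (mem_range.not.mp hn)

lemma renewalDensity_eq_zero_of_lt (hd : 0 < d) {x : ℝ} (hx : x < d) :
    renewalDensity lam d x = 0 := by
  rw [renewalDensity_eq_sum hd (N := 0) (by simpa using hx), sum_range_zero]

lemma intervalIntegrable_renewalDensity (hd : 0 < d) (a b : ℝ) :
    IntervalIntegrable (renewalDensity lam d) volume a b := by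
  obtain ⟨N, hN⟩ := exists_lt_succ_mul hd (max a b)
  refine (intervalIntegrable_congr fun x hx => renewalDensity_eq_sum hd
    ((uIoc_subset_uIcc hx).2.trans_lt hN)).mpr ?_
  simpa only [← Finset.sum_fn] using
    IntervalIntegrable.sum _ fun n _ => intervalIntegrable_shiftedErlangPDF lam d n a b

lemma integral_renewalDensity (hd : 0 < d) {N : ℕ} {a b : ℝ} (ha : a < (N + 1) * d)
    (hb : b < (N + 1) * d) :
    ∫ x in a..b, renewalDensity lam d x =
      ∑ n ∈ range N, (shiftedErlangCDF lam d n b - shiftedErlangCDF lam d n a) := by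
  rw [intervalIntegral.integral_congr fun x hx =>
      renewalDensity_eq_sum hd (N := N) (hx.2.trans_lt (max_lt ha hb)),
    intervalIntegral.integral_finsetSum fun n _ => intervalIntegrable_shiftedErlangPDF lam d n a b]
  exact sum_congr rfl fun n _ => integral_shiftedErlangPDF lam d n a b

lemma integral_renewalDensity_eq_zero (hd : 0 < d) {a b : ℝ} (ha : a ≤ d) (hb : b ≤ d) :
    ∫ x in a..b, renewalDensity lam d x = 0 := by
  rw [integral_renewalDensity hd (N := 1) (by norm_num; linarith) (by norm_num; linarith),
    sum_range_one, shiftedErlangCDF_eq_zero_of_le _ _ _ (by simpa using hb),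
    shiftedErlangCDF_eq_zero_of_le _ _ _ (by simpa using ha), sub_self]

lemma integral_const_add_mul_renewalDensity_add (hd : 0 < d) (a c t : ℝ) :
    ∫ s in (t - d)..t, (a + c * renewalDensity lam d (s + d)) =
      a * d + c * ∫ s in t..(t + d), renewalDensity lam d s := by
  have hshift : IntervalIntegrable (fun s => renewalDensity lam d (s + d)) volume (t - d) t := by
    simpa using (intervalIntegrable_renewalDensity hd t (t + d)).comp_add_right d
  rw [intervalIntegral.integral_add intervalIntegrable_const (hshift.const_mul c),
    intervalIntegral.integral_const, intervalIntegral.integral_const_mul c,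
    intervalIntegral.integral_comp_add_right, sub_add_cancel, smul_eq_mul]
  ring

theorem renewal_equation (hd : 0 < d) {u : ℝ} (hu : d ≤ u) :
    lam * (∫ x in (u - d)..u, renewalDensity lam d x) + renewalDensity lam d u = lam := by
  obtain ⟨N, hN⟩ := exists_lt_succ_mul hd u
  set H : ℕ → ℝ := fun n => lam * shiftedErlangCDF lam d n u + shiftedErlangPDF lam d n u
  have hH0 : H 0 = lam := by
    have hu' : u ∈ Ici (((0 : ℕ) + 1) * d) := by simpa using hu
    simp only [H, shiftedErlangCDF, shiftedErlangPDF, indicator_of_mem hu']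
    exact erlangCDF_add_erlangPDF_zero lam _
  have hHN : H N = 0 := by
    simp only [H, shiftedErlangCDF_eq_zero_of_le lam d N hN.le,
      shiftedErlangPDF_eq_zero_of_lt lam d N hN, mul_zero, add_zero]
  have hstep : ∀ n ∈ range N,
      lam * (shiftedErlangCDF lam d n u - shiftedErlangCDF lam d n (u - d)) +
        shiftedErlangPDF lam d n u = H n - H (n + 1) := fun n _ => by
    linear_combination -shiftedErlangCDF_sub_shiftedErlangCDF_succ lam d n u
  rw [integral_renewalDensity hd (by linarith) hN, renewalDensity_eq_sum hd hN, mul_sum,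
    ← sum_add_distrib, sum_congr rfl hstep, sum_range_sub', hH0, hHN, sub_zero]

end RenewalDensity

/-- with `a₀ = (1 + lam₀ d)⁻¹`, `f(t) = lam·θ(t-d)·e^{-lam(t-d)}`,
`R = Σ_{k≥1} f^{⋆k}`, the step input `lamStep` (equal to `lam₀` for `s ≤ 0` and `lam`
for `s > 0`) and the step response
`Astep(t) = a₀` for `t ≤ 0`, `Astep(t) = (a₀ lam₀/lam)(1 + (lam₀⁻¹ - lam⁻¹) R(t+d))`
for `t > 0`, the normalization condition
`1 = ∫_{t-d}^t lamStep(s) Astep(s) ds + Astep(t)` holds for all `t`. -/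
theorem stmt_4 (lam0 lam d : ℝ) (hlam0 : 0 < lam0) (hlam : 0 < lam) (hd : 0 < d)
    (f R : ℝ → ℝ)
    (hf : ∀ t : ℝ, f t = if d ≤ t then lam * Real.exp (-lam * (t - d)) else 0)
    (hR : ∀ t : ℝ, R t = ∑' n : ℕ, convPow f n t)
    (a0 : ℝ) (ha0 : a0 = (1 + lam0 * d)⁻¹)
    (lamStep Astep : ℝ → ℝ)
    (hlamStep : ∀ s : ℝ, lamStep s = if s ≤ 0 then lam0 else lam)
    (hAstep : ∀ t : ℝ, Astep t =
      if t ≤ 0 then a0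
      else a0 * lam0 / lam * (1 + (lam0⁻¹ - lam⁻¹) * R (t + d))) :
    ∀ t : ℝ, 1 = (∫ s in (t - d)..t, lamStep s * Astep s) + Astep t := by
  intro t
  obtain rfl : f = shiftedErlangPDF lam d 0 := by
    ext x; simp [hf, shiftedErlangPDF_zero, indicator_apply]
  obtain rfl : R = renewalDensity lam d := by
    ext x; simp only [hR, renewalDensity, convPow_shiftedErlangPDF_zero]
  set c := a0 * lam0 * (lam0⁻¹ - lam⁻¹) with hc
  have hintegrand :
      ∀ s ≠ 0, lamStep s * Astep s = lam0 * a0 + c * renewalDensity lam d (s + d) := by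
    intro s hs
    rw [hlamStep, hAstep]
    rcases hs.lt_or_gt with hs | hs
    · rw [if_pos hs.le, if_pos hs.le, renewalDensity_eq_zero_of_lt hd (by linarith)]
      ring
    · rw [if_neg hs.not_ge, if_neg hs.not_ge, hc]
      field_simp
  have hintegral : ∫ s in (t - d)..t, lamStep s * Astep s =
      lam0 * a0 * d + c * ∫ s in t..(t + d), renewalDensity lam d s := by
    rw [← integral_const_add_mul_renewalDensity_add hd]
    exact intervalIntegral.integral_congr_ae
      ((Measure.ae_ne volume 0).mono fun s hs _ => hintegrand s hs)
  have ha0 : a0 * (1 + lam0 * d) = 1 := by rw [ha0]; field_simp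
  rw [hintegral, hAstep]
  rcases le_or_gt t 0 with ht | ht
  · rw [integral_renewalDensity_eq_zero hd (by linarith) (by linarith), if_pos ht]
    linear_combination -ha0
  · have hrenewal := renewal_equation (lam := lam) hd (u := t + d) (by linarith)
    rw [add_sub_cancel_right] at hrenewal
    rw [if_neg ht.not_ge, hc]
    field_simp
    linear_combination -lam ^ 2 * ha0 - a0 * (lam - lam0) * hrenewal
end

section
/- Let β > 0, n ≥ 0 an integer, κ_k(x) = β^{k+1} x^k e^{−βx}/k! for 0 ≤ k ≤ n, and let ν : ℝ → ℝ be a bounded continuous function. Define b_k(t) = ∫_{−∞}^{t} κ_k(t−x) ν(x) dx for 0 ≤ k ≤ n. Then each b_k is differentiable and for all t ∈ ℝ: b_0'(t) = β ν(t) − β b_0(t), and b_k'(t) = β b_{k−1}(t) − β b_k(t) for 1 ≤ k ≤ n. -/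
/-!
Writing `κ_k(t - x) = β^{k+1}/k! · e^{-βt} · (t - x)^k e^{βx}` gives
`b_k(t) = β^{k+1}/k! · e^{-βt} · H_k g(t)` with `g(x) = e^{βx} ν(x)` and
`H_k g(t) = ∫_{-∞}^t (t - x)^k g(x) dx`, which converges because `ν` is bounded.
Then `(H_0 g)' = g` by the fundamental theorem of calculus, and `(H_{k+1} g)' = (k+1) H_k g`
follows by induction on `k`, simultaneously for all admissible `g`, from
`H_{k+1} g(t) = t · H_k g(t) - H_k (x g)(t)`. The product rule with `e^{-βt}` yields the system.
-/

open MeasureTheory Real Set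

theorem hasDerivAt_integral_Iic {E : Type*} [NormedAddCommGroup E] [NormedSpace ℝ E]
    [CompleteSpace E] {g : ℝ → E} (hg : Continuous g) (hint : ∀ t, IntegrableOn g (Iic t))
    (t : ℝ) : HasDerivAt (fun u => ∫ x in Iic u, g x) (g t) t := by
  have hsplit :
      (fun u => ∫ x in Iic u, g x) = fun u => (∫ x in Iic 0, g x) + ∫ x in 0..u, g x := by
    funext u
    rw [← intervalIntegral.integral_Iic_sub_Iic (hint 0) (hint u), add_sub_cancel]
  rw [hsplit]
  exact (intervalIntegral.integral_hasDerivAt_right (hg.intervalIntegrable 0 t)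
    (hg.stronglyMeasurableAtFilter _ _) hg.continuousAt).const_add _

theorem integrableOn_Iic_sub_pow_mul_exp {β : ℝ} (hβ : 0 < β) (k : ℕ) (t : ℝ) :
    IntegrableOn (fun x => (t - x) ^ k * exp (β * x)) (Iic t) := by
  have hgamma : IntegrableOn (fun s : ℝ => s ^ k * exp (-β * s)) (Ioi 0) := by
    simpa using integrableOn_rpow_mul_exp_neg_mul_rpow (s := k) (p := 1)
      (by linarith [k.cast_nonneg (α := ℝ)]) one_pos hβ
  have hreflect : IntegrableOn (fun x : ℝ => (t - x) ^ k * exp (-β * (t - x))) (Iio t) := by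
    have := ((Measure.measurePreserving_sub_left volume t).integrableOn_comp_preimage
      (measurableEmbedding_subLeft t)).2 hgamma
    simpa [Function.comp_def] using this
  rw [integrableOn_Iic_iff_integrableOn_Iio]
  refine IntegrableOn.congr_fun (hreflect.const_mul (exp (β * t))) (fun x _ => ?_)
    measurableSet_Iio
  rw [mul_left_comm, ← exp_add]
  ring_nf

def PowIntegrableIic (g : ℝ → ℝ) : Prop :=
  ∀ (k : ℕ) (t : ℝ), IntegrableOn (fun x => (t - x) ^ k * g x) (Iic t)

theorem PowIntegrableIic.id_mul {g : ℝ → ℝ} (hg : PowIntegrableIic g) :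
    PowIntegrableIic (fun x => x * g x) := fun k t =>
  IntegrableOn.congr_fun (((hg k t).const_mul t).sub (hg (k + 1) t))
    (fun x _ => by simp only [Pi.sub_apply]; ring) measurableSet_Iic

theorem powIntegrableIic_exp_mul {β : ℝ} (hβ : 0 < β) {ν : ℝ → ℝ}
    (hν : AEStronglyMeasurable ν) {C : ℝ} (hC : ∀ x, |ν x| ≤ C) :
    PowIntegrableIic (fun x => exp (β * x) * ν x) := fun k t => by
  have := (integrableOn_Iic_sub_pow_mul_exp hβ k t).mul_bdd hν.restrict (ae_of_all _ hC)
  exact this.congr (ae_of_all _ fun x => mul_assoc _ _ _)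

noncomputable def powKernelIntegral (k : ℕ) (g : ℝ → ℝ) (t : ℝ) : ℝ :=
  ∫ x in Iic t, (t - x) ^ k * g x

theorem powKernelIntegral_succ {g : ℝ → ℝ} (hg : PowIntegrableIic g) (k : ℕ) :
    powKernelIntegral (k + 1) g =
      fun t => t * powKernelIntegral k g t - powKernelIntegral k (fun x => x * g x) t := by
  funext t
  simp only [powKernelIntegral]
  rw [← integral_const_mul,
    ← integral_sub ((hg k t).const_mul t) (hg.id_mul k t)]
  congr 1
  funext x
  ring

theorem hasDerivAt_powKernelIntegral_zero {g : ℝ → ℝ} (hc : Continuous g)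
    (hg : PowIntegrableIic g) (t : ℝ) : HasDerivAt (powKernelIntegral 0 g) (g t) t := by
  have : powKernelIntegral 0 g = fun u => ∫ x in Iic u, g x := by
    funext u; simp [powKernelIntegral]
  exact this ▸ hasDerivAt_integral_Iic hc (by simpa using hg 0) t

theorem hasDerivAt_powKernelIntegral_succ (k : ℕ) {g : ℝ → ℝ} (hc : Continuous g)
    (hg : PowIntegrableIic g) (t : ℝ) :
    HasDerivAt (powKernelIntegral (k + 1) g) ((k + 1) * powKernelIntegral k g t) t := by
  induction k generalizing g with
  | zero =>
    rw [powKernelIntegral_succ hg]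
    refine ((hasDerivAt_id t).mul (hasDerivAt_powKernelIntegral_zero hc hg t)).sub
      (hasDerivAt_powKernelIntegral_zero (by fun_prop) hg.id_mul t) |>.congr_deriv ?_
    simp
  | succ k ih =>
    rw [powKernelIntegral_succ hg]
    refine ((hasDerivAt_id t).mul (ih hc hg)).sub (ih (by fun_prop) hg.id_mul) |>.congr_deriv ?_
    rw [powKernelIntegral_succ hg]
    push_cast
    simp only [id]
    ring

theorem integral_Iic_gammaKernel_mul (β : ℝ) (k : ℕ) (ν : ℝ → ℝ) (t : ℝ) :
    ∫ x in Iic t, β ^ (k + 1) * (t - x) ^ k * exp (-β * (t - x)) / k.factorial * ν x =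
      β ^ (k + 1) / k.factorial * exp (-β * t) *
        powKernelIntegral k (fun x => exp (β * x) * ν x) t := by
  rw [powKernelIntegral, ← integral_const_mul]
  congr 1
  funext x
  rw [show -β * (t - x) = -β * t + β * x by ring, exp_add]
  ring

/-- with gamma kernels `κ_k(x) = β^{k+1} x^k e^{-βx}/k!` and a bounded
continuous output rate `ν`, the auxiliary variables `b_k(t) = ∫_{-∞}^t κ_k(t-x) ν(x) dx`
(for `0 ≤ k ≤ n`) are differentiable and satisfy
`b_0'(t) = β ν(t) - β b_0(t)` and `b_k'(t) = β b_{k-1}(t) - β b_k(t)` for `1 ≤ k ≤ n`. -/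
theorem stmt_13 (β : ℝ) (hβ : 0 < β) (n : ℕ)
    (κ : ℕ → ℝ → ℝ)
    (hκ : ∀ (k : ℕ) (x : ℝ), κ k x = β ^ (k + 1) * x ^ k * Real.exp (-β * x) / (Nat.factorial k))
    (ν : ℝ → ℝ) (hνc : Continuous ν) (hνb : ∃ C : ℝ, ∀ t : ℝ, |ν t| ≤ C)
    (b : ℕ → ℝ → ℝ)
    (hb : ∀ k : ℕ, k ≤ n → ∀ t : ℝ, b k t = ∫ x in Set.Iic t, κ k (t - x) * ν x) :
    (∀ t : ℝ, HasDerivAt (b 0) (β * ν t - β * b 0 t) t) ∧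
    (∀ k : ℕ, 1 ≤ k → k ≤ n → ∀ t : ℝ,
      HasDerivAt (b k) (β * b (k - 1) t - β * b k t) t) := by
  obtain ⟨C, hC⟩ := hνb
  set g : ℝ → ℝ := fun x => exp (β * x) * ν x with hg_def
  have hgc : Continuous g := by fun_prop
  have hg : PowIntegrableIic g := powIntegrableIic_exp_mul hβ hνc.aestronglyMeasurable hC
  have hrep : ∀ k ≤ n, b k = fun t =>
      β ^ (k + 1) / k.factorial * (exp (-β * t) * powKernelIntegral k g t) := by
    intro k hk
    funext t
    simp_rw [hb k hk t, hκ, integral_Iic_gammaKernel_mul, mul_assoc]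
    rfl
  have hderiv : ∀ k ≤ n, ∀ t D, HasDerivAt (powKernelIntegral k g) D t →
      HasDerivAt (b k) (-β * b k t + β ^ (k + 1) / k.factorial * exp (-β * t) * D) t := by
    intro k hk t D hD
    rw [hrep k hk]
    refine ((((hasDerivAt_id t).const_mul (-β)).exp.mul hD).const_mul _).congr_deriv ?_
    simp only [id]
    ring
  constructor
  · intro t
    refine (hderiv 0 n.zero_le t _ (hasDerivAt_powKernelIntegral_zero hgc hg t)).congr_deriv ?_
    have hexp : exp (-β * t) * exp (β * t) = 1 := by rw [← exp_add]; simp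
    simp only [hg_def, zero_add, pow_one, Nat.factorial_zero, Nat.cast_one, div_one]
    linear_combination β * ν t * hexp
  · intro k hk1 hkn t
    obtain ⟨K, rfl⟩ := Nat.exists_eq_add_of_le' hk1
    refine (hderiv _ hkn t _ (hasDerivAt_powKernelIntegral_succ K hgc hg t)).congr_deriv ?_
    rw [Nat.add_sub_cancel, hrep K (by omega), Nat.factorial_succ]
    push_cast
    field_simp
    ring
end
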